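/- arXiv:2011.03368 — 3 statements merged into one kernel-verified Lean document; each statement's English description precedes it below -/
import Mathlib

section
/- Let Z = ∑_{i=1}^m X_i where each X_i is a nonnegative random variable with 1/X_i ~ χ²_{4(n−m+1)} (not necessarily independent), and n−m ≥ 1. Then for every t ≥ 1, P{ Z > (3m/(4(n−m+1)))·t } ≤ t^{−2(n−m)}. -/
open scoped Quaternion
open Matrix MeasureTheory ProbabilityTheory

noncomputable section

/-- The 4×4 real table of a quaternion used in the real counterpart. -/
def upsEntry (q : ℍ[ℝ]) : Matrix (Fin 4) (Fin 4) ℝ :=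
  !![q.re, -q.imI, -q.imJ, -q.imK;
     q.imI, q.re, -q.imK, q.imJ;
     q.imJ, q.imK, q.re, -q.imI;
     q.imK, -q.imJ, q.imI, q.re]

/-- Real counterpart `Υ_Q` of a quaternion matrix. -/
def Ups {m n : ℕ} (Q : Matrix (Fin m) (Fin n) ℍ[ℝ]) :
    Matrix (Fin 4 × Fin m) (Fin 4 × Fin n) ℝ :=
  fun p q => upsEntry (Q p.2 q.2) p.1 q.1

/-- Squared Frobenius norm of a quaternion matrix. -/
def frobSqQ {m n : ℕ} (A : Matrix (Fin m) (Fin n) ℍ[ℝ]) : ℝ :=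
  ∑ i, ∑ j, ‖A i j‖ ^ 2

/-- Frobenius norm of a quaternion matrix. -/
def frobQ {m n : ℕ} (A : Matrix (Fin m) (Fin n) ℍ[ℝ]) : ℝ :=
  Real.sqrt (frobSqQ A)

/-- Frobenius norm of a real matrix. -/
def frobR {α β : Type*} [Fintype α] [Fintype β] (M : Matrix α β ℝ) : ℝ :=
  Real.sqrt (∑ i, ∑ j, (M i j) ^ 2)

/-- Spectral norm of a real matrix: operator norm on Euclidean spaces. -/
def specR {α β : Type*} [Fintype α] [Fintype β] [DecidableEq β] (M : Matrix α β ℝ) : ℝ :=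
  ‖LinearMap.toContinuousLinearMap (Matrix.toEuclideanLin M)‖

/-- Spectral norm (largest singular value) of a quaternion matrix, defined as the
operator 2-norm of the induced map. -/
def specQ {m n : ℕ} (A : Matrix (Fin m) (Fin n) ℍ[ℝ]) : ℝ :=
  sSup {r : ℝ | ∃ x : Fin n → ℍ[ℝ], ∑ i, ‖x i‖ ^ 2 = 1 ∧
    r = Real.sqrt (∑ i, ‖A.mulVec x i‖ ^ 2)}


/-- Components of a quaternion as a `Fin 4`-indexed family. -/
def qcomp (a : Fin 4) (q : ℍ[ℝ]) : ℝ := ![q.re, q.imI, q.imJ, q.imK] a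

/-- Chi-squared distribution with `k` degrees of freedom, as a Gamma distribution. -/
def chiSq (k : ℕ) : Measure ℝ := gammaMeasure ((k : ℝ) / 2) (1 / 2)

open Real
open scoped ENNReal Nat

/-! Since `1 / X ~ χ²_{4(d+1)} = Γ(2(d+1), 1/2)`, the moment `E[X^{2d}] = 2^{-2d} Γ(2) / Γ(2d+2)`
equals `2^{-2d} / (2d+1)!`, and the elementary bound `(q+2)^q ≤ 3^q (q+1)!` turns this into
`‖X‖_{2d} ≤ 3 / (4(d+1))`. Minkowski's inequality in `L^{2d}`, which needs no independence,
gives `‖Z‖_{2d} ≤ 3m / (4(d+1))`, and Markov's inequality for `|Z|^{2d}` gives the tail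
bound `t^{-2d}`. -/

lemma add_one_pow_le_exp_one_mul_pow {x : ℝ} (hx : 0 < x) {k : ℕ} (hk : (k : ℝ) ≤ x) :
    (x + 1) ^ k ≤ exp 1 * x ^ k := by
  have hsplit : (x + 1) ^ k = (1 + x⁻¹) ^ k * x ^ k := by
    rw [← mul_pow]; congr 1; field_simp
  have hratio : (1 + x⁻¹) ^ k ≤ exp 1 :=
    calc (1 + x⁻¹) ^ k ≤ exp x⁻¹ ^ k := by
          gcongr; linarith [add_one_le_exp x⁻¹]
      _ = exp (k / x) := by rw [← exp_nat_mul, div_eq_mul_inv]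
      _ ≤ exp 1 := exp_le_exp.mpr ((div_le_one hx).mpr hk)
  rw [hsplit]; gcongr

lemma add_two_pow_le_three_pow_mul_factorial (q : ℕ) :
    ((q : ℝ) + 2) ^ q ≤ 3 ^ q * (q + 1)! := by
  induction q with
  | zero => norm_num
  | succ q ih =>
    have hstep : ((q : ℝ) + 2 + 1) ^ (q + 1) ≤ 3 * ((q : ℝ) + 2) ^ (q + 1) :=
      (add_one_pow_le_exp_one_mul_pow (by positivity) (by push_cast; linarith)).trans
        (by gcongr; exact exp_one_lt_three.le)
    calc ((q + 1 : ℕ) + 2 : ℝ) ^ (q + 1) = ((q : ℝ) + 2 + 1) ^ (q + 1) := by push_cast; ring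
      _ ≤ 3 * ((q : ℝ) + 2) * ((q : ℝ) + 2) ^ q := hstep.trans_eq (by ring)
      _ ≤ 3 * ((q : ℝ) + 2) * (3 ^ q * (q + 1)!) := by gcongr
      _ = 3 ^ (q + 1) * (q + 1 + 1)! := by push_cast [Nat.factorial_succ]; ring

lemma half_pow_div_factorial_le (q : ℕ) :
    (1 / 2 : ℝ) ^ q / (q + 1)! ≤ (3 / (2 * (q + 2))) ^ q := by
  rw [div_pow 3, mul_pow, div_le_div_iff₀ (by positivity) (by positivity)]
  calc (1 / 2 : ℝ) ^ q * (2 ^ q * (q + 2) ^ q) = (q + 2) ^ q := by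
        rw [← mul_assoc, ← mul_pow]; norm_num
    _ ≤ 3 ^ q * (q + 1)! := add_two_pow_le_three_pow_mul_factorial q

lemma gammaPDFReal_mul_inv_pow {a r : ℝ} (hr : 0 < r) {k : ℕ} (hk : (k : ℝ) < a) {y : ℝ}
    (hy : 0 < y) :
    gammaPDFReal a r y * (y⁻¹) ^ k
      = r ^ k * Gamma (a - k) / Gamma a * gammaPDFReal (a - k) r y := by
  have hΓ : Gamma (a - k) ≠ 0 := (Gamma_pos_of_pos (by linarith)).ne'
  have hr_pow : r ^ a = r ^ k * r ^ (a - k) := by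
    rw [← rpow_natCast, ← rpow_add hr, add_sub_cancel]
  have hy_pow : y ^ (a - 1) = y ^ k * y ^ (a - k - 1) := by
    rw [← rpow_natCast, ← rpow_add hy]; ring_nf
  simp only [gammaPDFReal, if_pos hy.le, hr_pow, hy_pow, inv_pow]
  field_simp

lemma lintegral_enorm_inv_pow_gammaMeasure {a r : ℝ} (hr : 0 < r) {k : ℕ} (hk : (k : ℝ) < a) :
    ∫⁻ y, ‖y⁻¹‖ₑ ^ k ∂gammaMeasure a r
      = ENNReal.ofReal (r ^ k * Gamma (a - k) / Gamma a) := by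
  have ha : 0 < a := by linarith [k.cast_nonneg (α := ℝ)]
  have hpdf : ∀ᵐ y ∂volume, gammaPDF a r y * ‖y⁻¹‖ₑ ^ k
      = ENNReal.ofReal (r ^ k * Gamma (a - k) / Gamma a) * gammaPDF (a - k) r y := by
    filter_upwards [compl_mem_ae_iff.mpr (measure_singleton (0 : ℝ))] with y (hy0 : y ≠ 0)
    rcases hy0.lt_or_gt with hy | hy
    · simp [gammaPDF_of_neg hy]
    · have hΓ := Gamma_pos_of_pos (by linarith : 0 < a - k)
      have hΓa := Gamma_pos_of_pos ha
      rw [Real.enorm_eq_ofReal (by positivity), gammaPDF, gammaPDF,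
        ← ENNReal.ofReal_pow (by positivity), ← ENNReal.ofReal_mul (gammaPDFReal_nonneg ha hr y),
        gammaPDFReal_mul_inv_pow hr hk hy, ENNReal.ofReal_mul (by positivity)]
  have hmeas (b : ℝ) : Measurable (gammaPDF b r) := (measurable_gammaPDFReal b r).ennreal_ofReal
  rw [gammaMeasure, lintegral_withDensity_eq_lintegral_mul _ (hmeas a) (by fun_prop),
    Pi.mul_def, lintegral_congr_ae hpdf, lintegral_const_mul _ (hmeas _),
    lintegral_gammaPDF_eq_one (by linarith) hr, mul_one]

lemma chiSq_ne_zero {k : ℕ} (hk : k ≠ 0) : chiSq k ≠ 0 :=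
  (isProbabilityMeasure_gammaMeasure (by positivity) (by norm_num)).ne_zero

section InverseChiSq

variable {Ω : Type*} [MeasurableSpace Ω] {μ : Measure Ω} {X : Ω → ℝ}

lemma aemeasurable_of_map_one_div_ne_zero (hX : μ.map (fun ω => 1 / X ω) ≠ 0) :
    AEMeasurable X μ := by
  simpa only [one_div, Pi.inv_def, inv_inv] using (AEMeasurable.of_map_ne_zero hX).inv

lemma lintegral_enorm_pow_eq_of_map_one_div {ν : Measure ℝ}
    (hX : μ.map (fun ω => 1 / X ω) = ν) (hν : ν ≠ 0) (k : ℕ) :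
    ∫⁻ ω, ‖X ω‖ₑ ^ k ∂μ = ∫⁻ y, ‖y⁻¹‖ₑ ^ k ∂ν := by
  rw [← hX, lintegral_map' (by fun_prop) (AEMeasurable.of_map_ne_zero (hX ▸ hν))]
  simp only [one_div, inv_inv]

lemma lintegral_enorm_pow_of_map_one_div_eq_chiSq {d : ℕ}
    (hX : μ.map (fun ω => 1 / X ω) = chiSq (4 * (d + 1))) :
    ∫⁻ ω, ‖X ω‖ₑ ^ (2 * d) ∂μ = ENNReal.ofReal ((1 / 2) ^ (2 * d) / (2 * d + 1)!) := by
  have hshape : ((4 * (d + 1) : ℕ) : ℝ) / 2 = (2 * d : ℕ) + 2 := by push_cast; ring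
  rw [lintegral_enorm_pow_eq_of_map_one_div hX (chiSq_ne_zero (by positivity)), chiSq,
    lintegral_enorm_inv_pow_gammaMeasure (by norm_num) (by rw [hshape]; linarith), hshape,
    add_sub_cancel_left, Gamma_two, mul_one, show ((2 * d : ℕ) : ℝ) + 2 = (2 * d + 1 : ℕ) + 1 by
      push_cast; ring, Gamma_nat_eq_factorial]

lemma eLpNorm_le_of_map_one_div_eq_chiSq {d : ℕ} (hd : d ≠ 0)
    (hX : μ.map (fun ω => 1 / X ω) = chiSq (4 * (d + 1))) :
    eLpNorm X (2 * d : ℕ) μ ≤ ENNReal.ofReal (3 / (4 * (d + 1))) := by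
  have hq : (0 : ℝ) < (2 * d : ℕ) := by positivity
  rw [eLpNorm_eq_lintegral_rpow_enorm_toReal (by positivity) (ENNReal.natCast_ne_top _),
    ENNReal.toReal_natCast, one_div, ENNReal.rpow_inv_le_iff hq]
  simp only [ENNReal.rpow_natCast]
  rw [lintegral_enorm_pow_of_map_one_div_eq_chiSq hX, ← ENNReal.ofReal_pow (by positivity)]
  refine ENNReal.ofReal_le_ofReal ((half_pow_div_factorial_le (2 * d)).trans_eq ?_)
  push_cast; ring_nf

end InverseChiSq

lemma eLpNorm_sum_le_card_mul {Ω ι E : Type*} [MeasurableSpace Ω] {μ : Measure Ω} [Fintype ι]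
    [NormedAddCommGroup E] {f : ι → Ω → E} (hf : ∀ i, AEStronglyMeasurable (f i) μ)
    {p C : ℝ≥0∞} (hp : 1 ≤ p) (hC : ∀ i, eLpNorm (f i) p μ ≤ C) :
    eLpNorm (∑ i, f i) p μ ≤ Fintype.card ι * C :=
  calc eLpNorm (∑ i, f i) p μ ≤ ∑ i, eLpNorm (f i) p μ := eLpNorm_sum_le (fun i _ => hf i) hp
    _ ≤ Fintype.card ι * C := (Finset.sum_le_card_nsmul _ _ _ fun i _ => hC i).trans_eq
      (by rw [nsmul_eq_mul, Finset.card_univ])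

lemma measure_lt_mul_le_rpow_neg_of_eLpNorm_le {Ω : Type*} [MeasurableSpace Ω] {μ : Measure Ω}
    {f : Ω → ℝ} (hf : AEStronglyMeasurable f μ) {p : ℝ≥0∞} (hp0 : p ≠ 0) (hp : p ≠ ∞)
    {c t : ℝ} (hc : 0 < c) (ht : 0 < t) (hfc : eLpNorm f p μ ≤ ENNReal.ofReal c) :
    μ {ω | c * t < f ω} ≤ ENNReal.ofReal (t ^ (-p.toReal)) := by
  have hct : 0 < c * t := mul_pos hc ht
  have hsub : {ω | c * t < f ω} ⊆ {ω | ENNReal.ofReal (c * t) ≤ ‖f ω‖ₑ} :=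
    fun ω (hω : c * t < f ω) => (ENNReal.ofReal_le_ofReal (hω.le.trans (le_abs_self _))).trans_eq
      (Real.enorm_eq_ofReal_abs _).symm
  have hmarkov := mul_meas_ge_le_pow_eLpNorm' μ hp0 hp hf (ENNReal.ofReal (c * t))
  calc μ {ω | c * t < f ω} ≤ μ {ω | ENNReal.ofReal (c * t) ≤ ‖f ω‖ₑ} := measure_mono hsub
    _ ≤ ENNReal.ofReal c ^ p.toReal / ENNReal.ofReal (c * t) ^ p.toReal := by
      rw [ENNReal.le_div_iff_mul_le (by simp [hct, ENNReal.rpow_eq_zero_iff])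
        (by simp [ENNReal.rpow_eq_top_iff]), mul_comm]
      exact hmarkov.trans (by gcongr)
    _ = ENNReal.ofReal (t ^ (-p.toReal)) := by
      rw [ENNReal.ofReal_rpow_of_pos hc, ENNReal.ofReal_rpow_of_pos hct,
        ← ENNReal.ofReal_div_of_pos (by positivity), mul_rpow hc.le ht.le, rpow_neg ht.le,
        div_mul_cancel_left₀ (by positivity)]

theorem stmt9_general {Ωs : Type*} [MeasurableSpace Ωs] (μ : Measure Ωs)
    [IsProbabilityMeasure μ] {m n : ℕ} (hgap : 1 ≤ n - m)
    (X : Fin m → Ωs → ℝ)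
    (hlaw : ∀ i, Measure.map (fun ω => 1 / X i ω) μ = chiSq (4 * (n - m + 1))) :
    ∀ t : ℝ, 1 ≤ t →
      (μ {ω | 3 * (m : ℝ) / (4 * ((n : ℝ) - (m : ℝ) + 1)) * t < ∑ i, X i ω}).toReal
        ≤ t ^ (-(2 * ((n : ℝ) - (m : ℝ)))) := by
  intro t ht
  obtain rfl | hm := m.eq_zero_or_pos
  · simp only [CharP.cast_eq_zero, mul_zero, zero_div, zero_mul, Finset.univ_eq_empty,
      Finset.sum_empty, lt_self_iff_false, Set.ofPred_false, measure_empty, ENNReal.toReal_zero]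
    positivity
  have hd : ((n - m : ℕ) : ℝ) = (n : ℝ) - m := Nat.cast_sub (by omega)
  have hgap' : (1 : ℝ) ≤ (n : ℝ) - m := by rw [← hd]; exact_mod_cast hgap
  have hX (i : Fin m) : AEStronglyMeasurable (X i) μ :=
    (aemeasurable_of_map_one_div_ne_zero
      ((hlaw i).trans_ne (chiSq_ne_zero (by omega)))).aestronglyMeasurable
  have hsum : eLpNorm (∑ i, X i) (2 * (n - m) : ℕ) μ
      ≤ ENNReal.ofReal (3 * m / (4 * ((n : ℝ) - m + 1))) := by
    refine (eLpNorm_sum_le_card_mul hX (by exact_mod_cast (by omega : 1 ≤ 2 * (n - m)))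
      fun i => eLpNorm_le_of_map_one_div_eq_chiSq (by omega) (hlaw i)).trans_eq ?_
    rw [Fintype.card_fin, ← ENNReal.ofReal_natCast, ← ENNReal.ofReal_mul m.cast_nonneg, hd]
    ring_nf
  have htail := measure_lt_mul_le_rpow_neg_of_eLpNorm_le
    (Finset.aestronglyMeasurable_sum _ fun i _ => hX i) (by positivity)
    (ENNReal.natCast_ne_top _) (div_pos (by positivity) (by linarith))
    (by positivity) hsum
  refine ENNReal.toReal_le_of_le_ofReal (by positivity) ?_
  rw [ENNReal.toReal_natCast, Nat.cast_mul, Nat.cast_ofNat, hd] at htail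
  simpa only [Finset.sum_apply] using htail

theorem stmt9 {Ωs : Type*} [MeasurableSpace Ωs] (μ : Measure Ωs)
    [IsProbabilityMeasure μ] {m n : ℕ} (hmn : m ≤ n) (hgap : 1 ≤ n - m)
    (X : Fin m → Ωs → ℝ) (hnn : ∀ i ω, 0 ≤ X i ω)
    (hlaw : ∀ i, Measure.map (fun ω => 1 / X i ω) μ = chiSq (4 * (n - m + 1))) :
    ∀ t : ℝ, 1 ≤ t →
      (μ {ω | 3 * (m : ℝ) / (4 * ((n : ℝ) - (m : ℝ) + 1)) * t < ∑ i, X i ω}).toReal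
        ≤ t ^ (-(2 * ((n : ℝ) - (m : ℝ)))) :=
  stmt9_general μ hgap X hlaw

end
end

section
/- (Deterministic error bound.) Let A ∈ ℍ^{m×n} have QSVD A = U·diag(Σ₁,Σ₂)·[V₁ V₂]* with Σ₁ ∈ ℝ^{k×k}, and let Ω ∈ ℍ^{n×ℓ} with ℓ ≥ k. Set Ω₁ = V₁*Ω ∈ ℍ^{k×ℓ} and Ω₂ = V₂*Ω, and assume Ω₁ has full row rank. If Q is a quaternion matrix with orthonormal columns spanning the range of AΩ, then for a ∈ {2, F}: ‖(I − QQ*)A‖_a² ≤ ‖Σ₂‖_a² + ‖Σ₂Ω₂Ω₁†‖_a². -/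
open scoped Quaternion
open Matrix MeasureTheory ProbabilityTheory

noncomputable section

/-- Moore–Penrose pseudoinverse of a full-row-rank quaternion matrix. -/
def qpinv {m n : ℕ} (G : Matrix (Fin m) (Fin n) ℍ[ℝ]) :
    Matrix (Fin n) (Fin m) ℍ[ℝ] :=
  Gᴴ * Ring.inverse (G * Gᴴ)

/-!
Since `AΩ` lies in the range of `Q`, the projector `I - QQ*` annihilates `AΩΩ₁†V₁*`; as
`Ω₁Ω₁† = I`, this removes the top block of `A`:
`(I - QQ*)A = (I - QQ*)U₂(Σ₂V₂* - Σ₂Ω₂Ω₁†V₁*)`. The factor `(I - QQ*)U₂` is a contraction, so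
both norms are bounded by those of `Σ₂V₂* - Σ₂Ω₂Ω₁†V₁*`. Because `‖x‖² = ‖V₁*x‖² + ‖V₂*x‖²`,
Cauchy–Schwarz bounds its spectral norm by `√(‖Σ₂‖² + ‖Σ₂Ω₂Ω₁†‖²)`, and Pythagoras on its rows
gives its squared Frobenius norm exactly as `‖Σ₂‖_F² + ‖Σ₂Ω₂Ω₁†‖_F²`.

Norms are handled through the `ℝ`-linear action `toCLM` of a quaternion matrix on quaternionic
Euclidean space, whose operator norm is `specQ`.
-/

open scoped InnerProductSpace

lemma mul_add_mul_le_sqrt_mul_sqrt (a b c d : ℝ) :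
    a * b + c * d ≤ √(a ^ 2 + c ^ 2) * √(b ^ 2 + d ^ 2) := by
  rw [← Real.sqrt_mul (by positivity)]
  exact Real.le_sqrt_of_sq_le (by nlinarith [sq_nonneg (a * d - b * c)])

section Ring

variable {R : Type*} [Ring R] {ι κ μ ν ρ σ τ : Type*} [Fintype ι] [Fintype κ] [Fintype μ]
  [Fintype ν] [Fintype ρ] [Fintype σ] [DecidableEq κ]

lemma mul_eq_mul_of_mul_mul_eq_zero {A : Matrix ι ν R} {L₁ : Matrix ι κ R} {B₁ : Matrix κ ν R}
    {U₂ : Matrix ι ρ R} {D₂ : Matrix ρ μ R} {B₂ : Matrix μ ν R} {Ω : Matrix ν σ R}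
    {P : Matrix σ κ R} {E : Matrix τ ι R}
    (hA : A = L₁ * B₁ + U₂ * D₂ * B₂) (hP : B₁ * Ω * P = 1) (hE : E * (A * Ω) = 0) :
    E * A = E * (U₂ * (D₂ * B₂ - D₂ * (B₂ * Ω) * P * B₁)) := by
  have hB₁ : B₁ * (Ω * (P * B₁)) = B₁ := by
    rw [← Matrix.mul_assoc, ← Matrix.mul_assoc, hP, Matrix.one_mul]
  have hsplit : A = U₂ * (D₂ * B₂ - D₂ * (B₂ * Ω) * P * B₁) + A * Ω * P * B₁ := by
    nth_rw 2 [hA]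
    simp only [Matrix.mul_sub, Matrix.add_mul, Matrix.mul_assoc, hB₁]
    rw [hA, Matrix.mul_assoc]
    abel
  rw [hsplit, Matrix.mul_add, ← Matrix.mul_assoc E (A * Ω * P), ← Matrix.mul_assoc E (A * Ω), hE,
    Matrix.zero_mul, Matrix.zero_mul, add_zero]

lemma one_sub_mul_conjTranspose_mul_self [StarRing R] [DecidableEq ι] {Q : Matrix ι κ R}
    (hQ : Qᴴ * Q = 1) : (1 - Q * Qᴴ) * Q = 0 := by
  rw [Matrix.sub_mul, Matrix.one_mul, Matrix.mul_assoc, hQ, Matrix.mul_one, sub_self]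

end Ring

lemma Quaternion.re_sum {α : Type*} (s : Finset α) (f : α → ℍ[ℝ]) :
    (∑ i ∈ s, f i).re = ∑ i ∈ s, (f i).re :=
  map_sum (QuaternionAlgebra.reₗ (R := ℝ) (-1) 0 (-1)) f s

lemma mul_qpinv_of_isUnit {m n : ℕ} {G : Matrix (Fin m) (Fin n) ℍ[ℝ]} (hG : IsUnit (G * Gᴴ)) :
    G * qpinv G = 1 := by
  rw [qpinv, ← Matrix.mul_assoc]
  exact Ring.mul_inverse_cancel _ hG

namespace QuaternionMatrix

variable {ι κ μ ν : Type*} [Fintype ι] [Fintype κ] [Fintype μ] [Fintype ν]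

def toCLM (M : Matrix ι κ ℍ[ℝ]) : EuclideanSpace ℍ[ℝ] κ →L[ℝ] EuclideanSpace ℍ[ℝ] ι :=
  LinearMap.toContinuousLinearMap
    { toFun := fun x => WithLp.toLp 2 (M *ᵥ x.ofLp)
      map_add' := fun x y => by simp [Matrix.mulVec_add]
      map_smul' := fun c x => by simp [Matrix.mulVec_smul] }

@[simp]
lemma toCLM_apply (M : Matrix ι κ ℍ[ℝ]) (x : EuclideanSpace ℍ[ℝ] κ) :
    toCLM M x = WithLp.toLp 2 (M *ᵥ x.ofLp) :=
  rfl

lemma toCLM_mul (M : Matrix ι κ ℍ[ℝ]) (N : Matrix κ ν ℍ[ℝ]) :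
    toCLM (M * N) = (toCLM M).comp (toCLM N) := by
  ext1 x
  simp [Matrix.mulVec_mulVec]

lemma toCLM_add (M N : Matrix ι κ ℍ[ℝ]) : toCLM (M + N) = toCLM M + toCLM N := by
  ext1 x
  simp [Matrix.add_mulVec]

lemma toCLM_sub (M N : Matrix ι κ ℍ[ℝ]) : toCLM (M - N) = toCLM M - toCLM N := by
  ext1 x
  simp [Matrix.sub_mulVec]

lemma toCLM_one [DecidableEq ι] : toCLM (1 : Matrix ι ι ℍ[ℝ]) = ContinuousLinearMap.id ℝ _ := by
  ext1 x
  simp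

lemma real_inner_eq_re_star_dotProduct (x y : EuclideanSpace ℍ[ℝ] ι) :
    ⟪x, y⟫_ℝ = (star y.ofLp ⬝ᵥ x.ofLp).re := by
  simp only [PiLp.inner_apply, Quaternion.inner_def, dotProduct, Pi.star_apply, Quaternion.re_sum]
  refine Finset.sum_congr rfl fun i _ => ?_
  rw [Quaternion.re_mul, Quaternion.re_mul]
  ring

lemma inner_toCLM_left (M : Matrix ι κ ℍ[ℝ]) (x : EuclideanSpace ℍ[ℝ] κ)
    (y : EuclideanSpace ℍ[ℝ] ι) : ⟪toCLM M x, y⟫_ℝ = ⟪x, toCLM Mᴴ y⟫_ℝ := by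
  simp only [real_inner_eq_re_star_dotProduct, toCLM_apply, Matrix.dotProduct_mulVec,
    Matrix.star_mulVec, Matrix.conjTranspose_conjTranspose]

lemma norm_toCLM_apply_sq (M : Matrix ι κ ℍ[ℝ]) (x : EuclideanSpace ℍ[ℝ] κ) :
    ‖toCLM M x‖ ^ 2 = ⟪x, toCLM (Mᴴ * M) x⟫_ℝ := by
  rw [← real_inner_self_eq_norm_sq, inner_toCLM_left, toCLM_mul]
  rfl

lemma norm_toCLM_apply_of_conjTranspose_mul_self [DecidableEq κ] {M : Matrix ι κ ℍ[ℝ]}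
    (hM : Mᴴ * M = 1) (x : EuclideanSpace ℍ[ℝ] κ) : ‖toCLM M x‖ = ‖x‖ := by
  have h := norm_toCLM_apply_sq M x
  rw [hM, toCLM_one, ContinuousLinearMap.id_apply, real_inner_self_eq_norm_sq] at h
  exact (pow_left_inj₀ (norm_nonneg _) (norm_nonneg _) two_ne_zero).mp h

lemma norm_toCLM_le_one_of_conjTranspose_mul_self [DecidableEq κ] {M : Matrix ι κ ℍ[ℝ]}
    (hM : Mᴴ * M = 1) : ‖toCLM M‖ ≤ 1 :=
  ContinuousLinearMap.opNorm_le_bound _ zero_le_one fun x => by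
    rw [norm_toCLM_apply_of_conjTranspose_mul_self hM, one_mul]

lemma conjTranspose_mul_self_one_sub_mul_conjTranspose [DecidableEq ι] [DecidableEq κ]
    {Q : Matrix ι κ ℍ[ℝ]} (hQ : Qᴴ * Q = 1) : (1 - Q * Qᴴ)ᴴ * (1 - Q * Qᴴ) = 1 - Q * Qᴴ := by
  have hidem : Q * Qᴴ * (Q * Qᴴ) = Q * Qᴴ := by
    rw [Matrix.mul_assoc, ← Matrix.mul_assoc Qᴴ, hQ, Matrix.one_mul]
  rw [Matrix.conjTranspose_sub, Matrix.conjTranspose_one, Matrix.conjTranspose_mul,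
    Matrix.conjTranspose_conjTranspose, Matrix.sub_mul, Matrix.mul_sub, Matrix.mul_sub,
    hidem, Matrix.one_mul, Matrix.mul_one, Matrix.one_mul, sub_self, sub_zero]

lemma norm_toCLM_one_sub_mul_conjTranspose_le [DecidableEq ι] [DecidableEq κ]
    {Q : Matrix ι κ ℍ[ℝ]} (hQ : Qᴴ * Q = 1) : ‖toCLM (1 - Q * Qᴴ)‖ ≤ 1 := by
  refine ContinuousLinearMap.opNorm_le_bound _ zero_le_one fun x => ?_
  have h : ‖toCLM (1 - Q * Qᴴ) x‖ ^ 2 = ‖x‖ ^ 2 - ‖toCLM Qᴴ x‖ ^ 2 := by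
    rw [norm_toCLM_apply_sq, conjTranspose_mul_self_one_sub_mul_conjTranspose hQ, toCLM_sub,
      toCLM_one, _root_.sub_apply, ContinuousLinearMap.id_apply, inner_sub_right,
      real_inner_self_eq_norm_sq, norm_toCLM_apply_sq Qᴴ, Matrix.conjTranspose_conjTranspose]
  rw [one_mul, ← pow_le_pow_iff_left₀ (norm_nonneg _) (norm_nonneg _) two_ne_zero, h]
  exact sub_le_self _ (sq_nonneg _)

lemma norm_toCLM_sub_toCLM_sq [DecidableEq κ] [DecidableEq μ] {P : Matrix ν μ ℍ[ℝ]}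
    {R : Matrix ν κ ℍ[ℝ]} (hP : Pᴴ * P = 1) (hR : Rᴴ * R = 1) (hPR : Pᴴ * R = 0)
    (a : EuclideanSpace ℍ[ℝ] μ) (b : EuclideanSpace ℍ[ℝ] κ) :
    ‖toCLM P a - toCLM R b‖ ^ 2 = ‖a‖ ^ 2 + ‖b‖ ^ 2 := by
  rw [norm_sub_sq_real, inner_toCLM_left, ← ContinuousLinearMap.comp_apply, ← toCLM_mul, hPR,
    norm_toCLM_apply_of_conjTranspose_mul_self hP, norm_toCLM_apply_of_conjTranspose_mul_self hR]
  simp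

lemma norm_toCLM_conjTranspose_apply_sq_add [DecidableEq ν] {V₁ : Matrix ν κ ℍ[ℝ]}
    {V₂ : Matrix ν μ ℍ[ℝ]} (hV : V₁ * V₁ᴴ + V₂ * V₂ᴴ = 1) (x : EuclideanSpace ℍ[ℝ] ν) :
    ‖toCLM V₁ᴴ x‖ ^ 2 + ‖toCLM V₂ᴴ x‖ ^ 2 = ‖x‖ ^ 2 := by
  rw [norm_toCLM_apply_sq, norm_toCLM_apply_sq, Matrix.conjTranspose_conjTranspose,
    Matrix.conjTranspose_conjTranspose, ← inner_add_right, ← _root_.add_apply,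
    ← toCLM_add, hV, toCLM_one, ContinuousLinearMap.id_apply, real_inner_self_eq_norm_sq]

lemma norm_toCLM_mul_conjTranspose_sub_sq_le [DecidableEq ν] {V₁ : Matrix ν κ ℍ[ℝ]}
    {V₂ : Matrix ν μ ℍ[ℝ]} (hV : V₁ * V₁ᴴ + V₂ * V₂ᴴ = 1) (X : Matrix ι μ ℍ[ℝ])
    (Y : Matrix ι κ ℍ[ℝ]) :
    ‖toCLM (X * V₂ᴴ - Y * V₁ᴴ)‖ ^ 2 ≤ ‖toCLM X‖ ^ 2 + ‖toCLM Y‖ ^ 2 := by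
  rw [← Real.le_sqrt (ContinuousLinearMap.opNorm_nonneg _) (by positivity)]
  refine ContinuousLinearMap.opNorm_le_bound _ (Real.sqrt_nonneg _) fun x => ?_
  calc ‖toCLM (X * V₂ᴴ - Y * V₁ᴴ) x‖ = ‖toCLM X (toCLM V₂ᴴ x) - toCLM Y (toCLM V₁ᴴ x)‖ := by
        rw [toCLM_sub, toCLM_mul, toCLM_mul]
        rfl
    _ ≤ ‖toCLM X‖ * ‖toCLM V₂ᴴ x‖ + ‖toCLM Y‖ * ‖toCLM V₁ᴴ x‖ :=
        (norm_sub_le _ _).trans (add_le_add ((toCLM X).le_opNorm _) ((toCLM Y).le_opNorm _))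
    _ ≤ √(‖toCLM X‖ ^ 2 + ‖toCLM Y‖ ^ 2) * √(‖toCLM V₂ᴴ x‖ ^ 2 + ‖toCLM V₁ᴴ x‖ ^ 2) :=
        mul_add_mul_le_sqrt_mul_sqrt _ _ _ _
    _ = √(‖toCLM X‖ ^ 2 + ‖toCLM Y‖ ^ 2) * ‖x‖ := by
        rw [add_comm (‖toCLM V₂ᴴ x‖ ^ 2), norm_toCLM_conjTranspose_apply_sq_add hV,
          Real.sqrt_sq (norm_nonneg _)]

lemma norm_toLp (x : ι → ℍ[ℝ]) : ‖WithLp.toLp 2 x‖ = √(∑ i, ‖x i‖ ^ 2) :=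
  PiLp.norm_eq_of_L2 _

lemma specQ_eq_norm_toCLM {m n : ℕ} (M : Matrix (Fin m) (Fin n) ℍ[ℝ]) :
    specQ M = ‖toCLM M‖ := by
  rw [← ContinuousLinearMap.sSup_sphere_eq_norm, specQ]
  congr 1
  ext r
  constructor
  · rintro ⟨x, hx, rfl⟩
    exact ⟨WithLp.toLp 2 x, by rw [mem_sphere_zero_iff_norm, norm_toLp, hx, Real.sqrt_one],
      norm_toLp _⟩
  · rintro ⟨x, hx, rfl⟩
    refine ⟨x.ofLp, ?_, norm_toLp _⟩
    rw [← PiLp.norm_sq_eq_of_L2, mem_sphere_zero_iff_norm.mp hx, one_pow]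

lemma frobSqQ_eq_sum_norm_sq {m n : ℕ} (M : Matrix (Fin m) (Fin n) ℍ[ℝ]) :
    frobSqQ M = ∑ j, ‖WithLp.toLp 2 (Mᵀ j)‖ ^ 2 := by
  simp only [frobSqQ, PiLp.norm_sq_eq_of_L2, Matrix.transpose_apply]
  exact Finset.sum_comm

lemma frobSqQ_conjTranspose {m n : ℕ} (M : Matrix (Fin m) (Fin n) ℍ[ℝ]) :
    frobSqQ Mᴴ = frobSqQ M := by
  simp only [frobSqQ, Matrix.conjTranspose_apply, norm_star]
  exact Finset.sum_comm

lemma frobSqQ_nonneg {m n : ℕ} (M : Matrix (Fin m) (Fin n) ℍ[ℝ]) : 0 ≤ frobSqQ M := by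
  unfold frobSqQ
  positivity

lemma frobQ_sq {m n : ℕ} (M : Matrix (Fin m) (Fin n) ℍ[ℝ]) : frobQ M ^ 2 = frobSqQ M :=
  Real.sq_sqrt (frobSqQ_nonneg M)

lemma frobSqQ_mul_le {m n k : ℕ} (M : Matrix (Fin m) (Fin n) ℍ[ℝ])
    (N : Matrix (Fin n) (Fin k) ℍ[ℝ]) : frobSqQ (M * N) ≤ ‖toCLM M‖ ^ 2 * frobSqQ N := by
  rw [frobSqQ_eq_sum_norm_sq, frobSqQ_eq_sum_norm_sq, Finset.mul_sum]
  gcongr with j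
  rw [← mul_pow]
  exact pow_le_pow_left₀ (norm_nonneg _) ((toCLM M).le_opNorm (WithLp.toLp 2 (Nᵀ j))) 2

lemma frobSqQ_mul_conjTranspose_sub {m n k s : ℕ} {V₁ : Matrix (Fin n) (Fin k) ℍ[ℝ]}
    {V₂ : Matrix (Fin n) (Fin s) ℍ[ℝ]} (hV11 : V₁ᴴ * V₁ = 1) (hV22 : V₂ᴴ * V₂ = 1)
    (hV12 : V₁ᴴ * V₂ = 0) (X : Matrix (Fin m) (Fin s) ℍ[ℝ]) (Y : Matrix (Fin m) (Fin k) ℍ[ℝ]) :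
    frobSqQ (X * V₂ᴴ - Y * V₁ᴴ) = frobSqQ X + frobSqQ Y := by
  have hV21 : V₂ᴴ * V₁ = 0 := by simpa using congrArg Matrix.conjTranspose hV12
  rw [← frobSqQ_conjTranspose, ← frobSqQ_conjTranspose X, ← frobSqQ_conjTranspose Y]
  simp only [frobSqQ_eq_sum_norm_sq, ← Finset.sum_add_distrib]
  refine Finset.sum_congr rfl fun j _ => ?_
  rw [← norm_toCLM_sub_toCLM_sq hV22 hV11 hV21, Matrix.conjTranspose_sub,
    Matrix.conjTranspose_mul, Matrix.conjTranspose_mul, Matrix.conjTranspose_conjTranspose,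
    Matrix.conjTranspose_conjTranspose]
  -- column `j` of `V * Z` is `V *ᵥ Zᵀ j` by definition of the product
  rfl

end QuaternionMatrix

open QuaternionMatrix in
theorem stmt14_general {m n k s l r : ℕ}
    (A : Matrix (Fin m) (Fin n) ℍ[ℝ])
    (U₁ : Matrix (Fin m) (Fin k) ℍ[ℝ]) (U₂ : Matrix (Fin m) (Fin s) ℍ[ℝ])
    (V₁ : Matrix (Fin n) (Fin k) ℍ[ℝ]) (V₂ : Matrix (Fin n) (Fin s) ℍ[ℝ])
    (σ1 : Fin k → ℝ) (σ2 : Fin s → ℝ)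
    (hU22 : U₂ᴴ * U₂ = 1)
    (hV11 : V₁ᴴ * V₁ = 1) (hV22 : V₂ᴴ * V₂ = 1) (hV12 : V₁ᴴ * V₂ = 0)
    (hVfull : V₁ * V₁ᴴ + V₂ * V₂ᴴ = 1)
    (hA : A = U₁ * Matrix.diagonal (fun i => ((σ1 i : ℝ) : ℍ[ℝ])) * V₁ᴴ
            + U₂ * Matrix.diagonal (fun j => ((σ2 j : ℝ) : ℍ[ℝ])) * V₂ᴴ)
    (Ω : Matrix (Fin n) (Fin l) ℍ[ℝ])
    (hrank : IsUnit ((V₁ᴴ * Ω) * (V₁ᴴ * Ω)ᴴ))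
    (Q : Matrix (Fin m) (Fin r) ℍ[ℝ]) (hQ : Qᴴ * Q = 1)
    (hrange₁ : ∃ R, A * Ω = Q * R) :
    specQ ((1 - Q * Qᴴ) * A) ^ 2
        ≤ specQ (Matrix.diagonal (fun j => ((σ2 j : ℝ) : ℍ[ℝ]))) ^ 2
          + specQ (Matrix.diagonal (fun j => ((σ2 j : ℝ) : ℍ[ℝ]))
              * (V₂ᴴ * Ω) * qpinv (V₁ᴴ * Ω)) ^ 2 ∧
    frobQ ((1 - Q * Qᴴ) * A) ^ 2
        ≤ frobQ (Matrix.diagonal (fun j => ((σ2 j : ℝ) : ℍ[ℝ]))) ^ 2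
          + frobQ (Matrix.diagonal (fun j => ((σ2 j : ℝ) : ℍ[ℝ]))
              * (V₂ᴴ * Ω) * qpinv (V₁ᴴ * Ω)) ^ 2 := by
  -- the witness in `hrange₁` is elaborated as a `CStarMatrix`; read it as a plain `Matrix`
  obtain ⟨R, hR⟩ : ∃ R : Matrix (Fin r) (Fin l) ℍ[ℝ], A * Ω = Q * R := hrange₁
  have hkill : (1 - Q * Qᴴ) * (A * Ω) = 0 := by
    rw [hR, ← Matrix.mul_assoc, one_sub_mul_conjTranspose_mul_self hQ, Matrix.zero_mul]
  rw [mul_eq_mul_of_mul_mul_eq_zero hA (mul_qpinv_of_isUnit hrank) hkill, ← Matrix.mul_assoc]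
  have hcontr : ‖toCLM ((1 - Q * Qᴴ) * U₂)‖ ≤ 1 := by
    rw [toCLM_mul]
    exact (ContinuousLinearMap.opNorm_comp_le _ _).trans (mul_le_one₀
      (norm_toCLM_one_sub_mul_conjTranspose_le hQ) (ContinuousLinearMap.opNorm_nonneg _)
      (norm_toCLM_le_one_of_conjTranspose_mul_self hU22))
  constructor
  · simp only [specQ_eq_norm_toCLM]
    refine le_trans ?_ (norm_toCLM_mul_conjTranspose_sub_sq_le hVfull _ _)
    rw [toCLM_mul]
    gcongr
    exact (ContinuousLinearMap.opNorm_comp_le _ _).trans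
      (mul_le_of_le_one_left (ContinuousLinearMap.opNorm_nonneg _) hcontr)
  · simp only [frobQ_sq]
    rw [← frobSqQ_mul_conjTranspose_sub hV11 hV22 hV12]
    exact (frobSqQ_mul_le _ _).trans (mul_le_of_le_one_left (frobSqQ_nonneg _)
      (pow_le_one₀ (ContinuousLinearMap.opNorm_nonneg _) hcontr))

theorem stmt14 {m n k s l r : ℕ} (hl : k ≤ l)
    (A : Matrix (Fin m) (Fin n) ℍ[ℝ])
    (U₁ : Matrix (Fin m) (Fin k) ℍ[ℝ]) (U₂ : Matrix (Fin m) (Fin s) ℍ[ℝ])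
    (V₁ : Matrix (Fin n) (Fin k) ℍ[ℝ]) (V₂ : Matrix (Fin n) (Fin s) ℍ[ℝ])
    (σ1 : Fin k → ℝ) (σ2 : Fin s → ℝ)
    (hU11 : U₁ᴴ * U₁ = 1) (hU22 : U₂ᴴ * U₂ = 1) (hU12 : U₁ᴴ * U₂ = 0)
    (hV11 : V₁ᴴ * V₁ = 1) (hV22 : V₂ᴴ * V₂ = 1) (hV12 : V₁ᴴ * V₂ = 0)
    (hVfull : V₁ * V₁ᴴ + V₂ * V₂ᴴ = 1)
    (hσ10 : ∀ i, 0 ≤ σ1 i) (hσ20 : ∀ j, 0 ≤ σ2 j)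
    (hσ1a : ∀ i j : Fin k, i ≤ j → σ1 j ≤ σ1 i)
    (hσ2a : ∀ i j : Fin s, i ≤ j → σ2 j ≤ σ2 i)
    (hsplit : ∀ (i : Fin k) (j : Fin s), σ2 j ≤ σ1 i)
    (hA : A = U₁ * Matrix.diagonal (fun i => ((σ1 i : ℝ) : ℍ[ℝ])) * V₁ᴴ
            + U₂ * Matrix.diagonal (fun j => ((σ2 j : ℝ) : ℍ[ℝ])) * V₂ᴴ)
    (Ω : Matrix (Fin n) (Fin l) ℍ[ℝ])
    (hrank : IsUnit ((V₁ᴴ * Ω) * (V₁ᴴ * Ω)ᴴ))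
    (Q : Matrix (Fin m) (Fin r) ℍ[ℝ]) (hQ : Qᴴ * Q = 1)
    (hrange₁ : ∃ R, A * Ω = Q * R) (hrange₂ : ∃ W, Q = A * Ω * W) :
    specQ ((1 - Q * Qᴴ) * A) ^ 2
        ≤ specQ (Matrix.diagonal (fun j => ((σ2 j : ℝ) : ℍ[ℝ]))) ^ 2
          + specQ (Matrix.diagonal (fun j => ((σ2 j : ℝ) : ℍ[ℝ]))
              * (V₂ᴴ * Ω) * qpinv (V₁ᴴ * Ω)) ^ 2 ∧
    frobQ ((1 - Q * Qᴴ) * A) ^ 2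
        ≤ frobQ (Matrix.diagonal (fun j => ((σ2 j : ℝ) : ℍ[ℝ]))) ^ 2
          + frobQ (Matrix.diagonal (fun j => ((σ2 j : ℝ) : ℍ[ℝ]))
              * (V₂ᴴ * Ω) * qpinv (V₁ᴴ * Ω)) ^ 2 :=
  stmt14_general A U₁ U₂ V₁ V₂ σ1 σ2 hU22 hV11 hV22 hV12 hVfull hA Ω hrank Q hQ hrange₁

end
end

section
/- (Power scheme error transfer.) Let A ∈ ℍ^{m×n}, q ≥ 0 an integer, C = (AA*)^q A, and let P be any orthogonal projector on ℍ^m (P* = P, P² = P). Then ‖(I − P)A‖₂ ≤ ‖(I − P)C‖₂^{1/(2q+1)}. -/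
open scoped Quaternion
open Matrix MeasureTheory ProbabilityTheory

noncomputable section

/-!
For a unit vector `u` and `T = A Aᴴ`, the moments `j ↦ ⟪u, Tʲ u⟫` are log-convex by
Cauchy–Schwarz (even moments are `‖Tⁱ u‖²`, odd ones `‖Aᴴ Tⁱ u‖²`), which gives the
Hölder–McCarthy inequality `⟪u, T u⟫ᵏ ≤ ⟪u, Tᵏ u⟫`. If `y = (I - P) A x` with `‖x‖ ≤ 1` and
`u = y / ‖y‖`, then `‖y‖² ≤ ⟪u, T u⟫`, while `⟪u, T^(2q+1) u⟫ = ‖Cᴴ (I - P) u‖² ≤ ‖(I - P) C‖²`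
because `(I - P) u = u`. The argument only uses that `ℍⁿ` is a real Hilbert space on which
quaternion matrices act as real-linear maps with adjoint `Aᴴ`.
-/

open scoped InnerProductSpace InnerProduct
open ContinuousLinearMap

theorem apply_one_pow_le_of_sq_le_mul {f : ℕ → ℝ} (h0 : f 0 = 1) (hf : ∀ j, 0 ≤ f j)
    (hlog : ∀ j, f (j + 1) ^ 2 ≤ f j * f (j + 2)) (k : ℕ) : f 1 ^ k ≤ f k := by
  have hstep : ∀ j, f 1 * f j ≤ f (j + 1) := by
    intro j
    induction j with
    | zero => rw [h0, mul_one]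
    | succ j ih =>
      rcases (hf j).eq_or_lt with hj | hj
      · have h := hlog j
        rw [← hj, zero_mul] at h
        have : f (j + 1) = 0 := pow_eq_zero_iff two_ne_zero |>.mp (le_antisymm h (sq_nonneg _))
        rw [this, mul_zero]
        exact hf _
      · refine le_of_mul_le_mul_left ?_ hj
        calc f j * (f 1 * f (j + 1)) = f 1 * f j * f (j + 1) := by ring
          _ ≤ f (j + 1) ^ 2 := by rw [sq]; exact mul_le_mul_of_nonneg_right ih (hf _)
          _ ≤ f j * f (j + 1 + 1) := hlog j
  induction k with
  | zero => rw [pow_zero, h0]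
  | succ k ih => calc
      f 1 ^ (k + 1) = f 1 * f 1 ^ k := pow_succ' _ _
      _ ≤ f 1 * f k := mul_le_mul_of_nonneg_left ih (hf 1)
      _ ≤ f (k + 1) := hstep k

section Hilbert

variable {E F : Type*} [NormedAddCommGroup E] [InnerProductSpace ℝ E] [CompleteSpace E]
  [NormedAddCommGroup F] [InnerProductSpace ℝ F] [CompleteSpace F] (A : E →L[ℝ] F)

theorem inner_pow_comp_adjoint_add (u : F) (a b : ℕ) :
    ⟪u, ((A ∘L A†) ^ (a + b)) u⟫_ℝ = ⟪((A ∘L A†) ^ a) u, ((A ∘L A†) ^ b) u⟫_ℝ := by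
  rw [pow_add, mul_apply_eq_comp, ← adjoint_inner_left,
    ((isPositive_self_comp_adjoint A).isSelfAdjoint.pow a).adjoint_eq]

theorem inner_pow_comp_adjoint_add_add_one (u : F) (a b : ℕ) :
    ⟪u, ((A ∘L A†) ^ (a + b + 1)) u⟫_ℝ =
      ⟪(A†) (((A ∘L A†) ^ a) u), (A†) (((A ∘L A†) ^ b) u)⟫_ℝ := by
  rw [add_assoc, inner_pow_comp_adjoint_add, pow_succ', mul_apply_eq_comp,
    ContinuousLinearMap.comp_apply, adjoint_inner_left]

theorem inner_pow_comp_adjoint_nonneg (u : F) (j : ℕ) : 0 ≤ ⟪u, ((A ∘L A†) ^ j) u⟫_ℝ := by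
  obtain ⟨i, rfl | rfl⟩ := Nat.even_or_odd' j
  · rw [two_mul, inner_pow_comp_adjoint_add]
    exact real_inner_self_nonneg
  · rw [two_mul, inner_pow_comp_adjoint_add_add_one]
    exact real_inner_self_nonneg

theorem sq_inner_pow_comp_adjoint_succ_le (u : F) (j : ℕ) :
    ⟪u, ((A ∘L A†) ^ (j + 1)) u⟫_ℝ ^ 2 ≤
      ⟪u, ((A ∘L A†) ^ j) u⟫_ℝ * ⟪u, ((A ∘L A†) ^ (j + 2)) u⟫_ℝ := by
  obtain ⟨i, rfl | rfl⟩ := Nat.even_or_odd' j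
  · rw [show 2 * i + 1 = i + (i + 1) by ring, show 2 * i + 2 = (i + 1) + (i + 1) by ring, two_mul,
      inner_pow_comp_adjoint_add, inner_pow_comp_adjoint_add, inner_pow_comp_adjoint_add, sq]
    exact real_inner_mul_inner_self_le _ _
  · rw [show 2 * i + 1 + 1 = i + (i + 1) + 1 by ring,
      show 2 * i + 1 + 2 = (i + 1) + (i + 1) + 1 by ring, two_mul,
      inner_pow_comp_adjoint_add_add_one, inner_pow_comp_adjoint_add_add_one,
      inner_pow_comp_adjoint_add_add_one, sq]
    exact real_inner_mul_inner_self_le _ _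

theorem inner_comp_adjoint_apply_pow_le (u : F) (hu : ‖u‖ = 1) (k : ℕ) :
    ⟪u, (A ∘L A†) u⟫_ℝ ^ k ≤ ⟪u, ((A ∘L A†) ^ k) u⟫_ℝ := by
  simpa using apply_one_pow_le_of_sq_le_mul (f := fun j => ⟪u, ((A ∘L A†) ^ j) u⟫_ℝ)
    (by simp [hu]) (inner_pow_comp_adjoint_nonneg A u)
    (sq_inner_pow_comp_adjoint_succ_le A u) k

variable {S : F →L[ℝ] F}

theorem sq_norm_starProjection_apply_le (hS : IsStarProjection S) {x : E} (hx : ‖x‖ ≤ 1) :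
    ‖S (A x)‖ ^ 2 ≤ ‖(A†) (S (A x))‖ := by
  have hSS : S (S (A x)) = S (A x) := by
    rw [← mul_apply_eq_comp, hS.isIdempotentElem.eq]
  calc ‖S (A x)‖ ^ 2 = ⟪(A†) (S (A x)), x⟫_ℝ := by
        rw [adjoint_inner_left, ← real_inner_self_eq_norm_sq, ← adjoint_inner_left S,
          hS.isSelfAdjoint.adjoint_eq, hSS]
    _ ≤ ‖(A†) (S (A x))‖ * ‖x‖ := real_inner_le_norm _ _
    _ ≤ ‖(A†) (S (A x))‖ := mul_le_of_le_one_right (norm_nonneg _) hx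

theorem adjoint_starProjection_comp_apply (hS : IsStarProjection S) (q : ℕ) {u : F}
    (hu : S u = u) :
    ((S ∘L ((A ∘L A†) ^ q) ∘L A)†) u = (A†) (((A ∘L A†) ^ q) u) := by
  rw [adjoint_comp, adjoint_comp, hS.isSelfAdjoint.adjoint_eq,
    ((isPositive_self_comp_adjoint A).isSelfAdjoint.pow q).adjoint_eq]
  simp [hu]

theorem norm_starProjection_apply_pow_le (hS : IsStarProjection S) (q : ℕ) {x : E}
    (hx : ‖x‖ ≤ 1) : ‖S (A x)‖ ^ (2 * q + 1) ≤ ‖S ∘L ((A ∘L A†) ^ q) ∘L A‖ := by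
  set y := S (A x)
  set M := S ∘L ((A ∘L A†) ^ q) ∘L A
  rcases eq_or_ne y 0 with hy | hy
  · simp [hy]
  set u := ‖y‖⁻¹ • y
  have hu : ‖u‖ = 1 := norm_smul_inv_norm hy
  have hSu : S u = u := by
    rw [map_smul, ← mul_apply_eq_comp, hS.isIdempotentElem.eq]
  have hy_le : ‖y‖ ≤ ‖(A†) u‖ := by
    have hy0 : 0 < ‖y‖ := norm_pos_iff.mpr hy
    have h : ‖y‖ * ‖y‖ ≤ ‖y‖ * ‖(A†) u‖ := by
      rw [map_smul, norm_smul, norm_inv, norm_norm, mul_inv_cancel_left₀ hy0.ne', ← sq]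
      exact sq_norm_starProjection_apply_le A hS hx
    exact le_of_mul_le_mul_left h hy0
  have h1 : ‖y‖ ^ 2 ≤ ⟪u, (A ∘L A†) u⟫_ℝ := by
    rw [ContinuousLinearMap.comp_apply, ← adjoint_inner_left, real_inner_self_eq_norm_sq]
    exact pow_le_pow_left₀ (norm_nonneg _) hy_le 2
  refine (pow_le_pow_iff_left₀ (by positivity) (norm_nonneg M) two_ne_zero).mp ?_
  calc (‖y‖ ^ (2 * q + 1)) ^ 2 = (‖y‖ ^ 2) ^ (2 * q + 1) := by ring
    _ ≤ ⟪u, (A ∘L A†) u⟫_ℝ ^ (2 * q + 1) := pow_le_pow_left₀ (by positivity) h1 _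
    _ ≤ ⟪u, ((A ∘L A†) ^ (2 * q + 1)) u⟫_ℝ := inner_comp_adjoint_apply_pow_le A u hu _
    _ = ‖(M†) u‖ ^ 2 := by
        rw [two_mul, inner_pow_comp_adjoint_add_add_one, real_inner_self_eq_norm_sq,
          adjoint_starProjection_comp_apply A hS q hSu]
    _ ≤ ‖M‖ ^ 2 := by
        refine pow_le_pow_left₀ (norm_nonneg _) ?_ 2
        simpa [hu] using (M†).le_opNorm u

theorem norm_starProjection_comp_le_rpow (hS : IsStarProjection S) (q : ℕ) :
    ‖S ∘L A‖ ≤ ‖S ∘L ((A ∘L A†) ^ q) ∘L A‖ ^ ((1 : ℝ) / (2 * q + 1)) := by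
  refine opNorm_le_of_unit_norm (by positivity) fun x hx => ?_
  rw [one_div, Real.le_rpow_inv_iff_of_pos (norm_nonneg _) (norm_nonneg _) (by positivity)]
  exact_mod_cast norm_starProjection_apply_pow_le A hS q hx.le

end Hilbert

theorem Quaternion.inner_star_mul_left (c a b : ℍ[ℝ]) : ⟪star c * a, b⟫_ℝ = ⟪a, c * b⟫_ℝ := by
  simp only [Quaternion.inner_def, Quaternion.re_mul, Quaternion.imI_mul, Quaternion.imJ_mul,
    Quaternion.imK_mul, Quaternion.re_star, Quaternion.imI_star, Quaternion.imJ_star,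
    Quaternion.imK_star]
  ring

abbrev QuatVec (ι : Type*) := PiLp 2 fun _ : ι => ℍ[ℝ]

namespace Matrix

variable {ι κ μ : Type*} [Fintype ι] [Fintype κ] [Fintype μ]

def toQuatCLM (M : Matrix ι κ ℍ[ℝ]) : QuatVec κ →L[ℝ] QuatVec ι :=
  LinearMap.toContinuousLinearMap
    { toFun := fun x => WithLp.toLp 2 (M *ᵥ x.ofLp)
      map_add' := fun x y => by simp [mulVec_add]
      map_smul' := fun c x => by simp [mulVec_smul] }

@[simp]
theorem toQuatCLM_apply (M : Matrix ι κ ℍ[ℝ]) (x : QuatVec κ) :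
    toQuatCLM M x = WithLp.toLp 2 (M *ᵥ x.ofLp) :=
  rfl

theorem toQuatCLM_mul (M : Matrix ι κ ℍ[ℝ]) (N : Matrix κ μ ℍ[ℝ]) :
    toQuatCLM (M * N) = toQuatCLM M ∘L toQuatCLM N :=
  ContinuousLinearMap.ext fun x => by simp [mulVec_mulVec]

theorem toQuatCLM_one [DecidableEq ι] : toQuatCLM (1 : Matrix ι ι ℍ[ℝ]) = 1 :=
  ContinuousLinearMap.ext fun x => by simp

theorem toQuatCLM_pow [DecidableEq ι] (M : Matrix ι ι ℍ[ℝ]) (k : ℕ) :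
    toQuatCLM (M ^ k) = toQuatCLM M ^ k := by
  induction k with
  | zero => rw [pow_zero, pow_zero, toQuatCLM_one]
  | succ k ih => rw [pow_succ, pow_succ, toQuatCLM_mul, ih, mul_def]

theorem toQuatCLM_conjTranspose (M : Matrix ι κ ℍ[ℝ]) :
    toQuatCLM Mᴴ = (toQuatCLM M)† := by
  refine (eq_adjoint_iff _ _).mpr fun x y => ?_
  simp only [toQuatCLM_apply, PiLp.inner_apply, mulVec, dotProduct, conjTranspose_apply,
    sum_inner, inner_sum, Quaternion.inner_star_mul_left]
  exact Finset.sum_comm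

theorem isStarProjection_toQuatCLM [DecidableEq ι] {P : Matrix ι ι ℍ[ℝ]}
    (hP : IsStarProjection P) : IsStarProjection (toQuatCLM P) where
  isIdempotentElem := by rw [IsIdempotentElem, mul_def, ← toQuatCLM_mul, hP.isIdempotentElem.eq]
  isSelfAdjoint := by
    rw [IsSelfAdjoint, star_eq_adjoint, ← toQuatCLM_conjTranspose, ← star_eq_conjTranspose,
      hP.isSelfAdjoint.star_eq]

end Matrix

theorem specQ_eq_norm_toQuatCLM {m n : ℕ} (M : Matrix (Fin m) (Fin n) ℍ[ℝ]) :
    specQ M = ‖M.toQuatCLM‖ := by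
  rw [← sSup_sphere_eq_norm, specQ]
  congr 1
  ext r
  constructor
  · rintro ⟨x, hx, rfl⟩
    refine ⟨WithLp.toLp 2 x, ?_, ?_⟩
    · simp [PiLp.norm_eq_of_L2, hx]
    · simp [PiLp.norm_eq_of_L2]
  · rintro ⟨x, hx, rfl⟩
    refine ⟨x.ofLp, ?_, ?_⟩
    · simpa [PiLp.norm_eq_of_L2] using hx
    · simp [PiLp.norm_eq_of_L2]

theorem stmt16 {m n : ℕ} (A : Matrix (Fin m) (Fin n) ℍ[ℝ]) (q : ℕ)
    (P : Matrix (Fin m) (Fin m) ℍ[ℝ]) (hP : Pᴴ = P) (hP2 : P * P = P) :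
    specQ ((1 - P) * A) ≤ specQ ((1 - P) * ((A * Aᴴ) ^ q * A)) ^ ((1 : ℝ) / (2 * q + 1)) := by
  simp only [specQ_eq_norm_toQuatCLM, toQuatCLM_mul, toQuatCLM_pow, toQuatCLM_conjTranspose]
  have hS : IsStarProjection (1 - P) := (isStarProjection_iff'.mpr ⟨hP2, hP⟩).one_sub
  exact norm_starProjection_comp_le_rpow _ (isStarProjection_toQuatCLM hS) q

end
end
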